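/- arXiv:1305.1020 — 2 statements merged into one kernel-verified Lean document; each statement's English description precedes it below -/
import Mathlib

section
/- Let T : Matrix (Fin n) (Fin n) ℂ →ₗ Matrix (Fin m) (Fin m) ℂ be a completely positive linear map, and let x, y ∈ Matrix (Fin n) (Fin n) ℂ. Then ‖T(x·y)‖ ≤ ‖T(x·x*)‖^(1/2) · ‖T(y*·y)‖^(1/2), where ‖·‖ is the operator norm. -/
open Matrix
open scoped ComplexOrder

open scoped Matrix.Norms.L2Operator

/-- `T` is completely positive: for every `k`, the amplification `id_{M_k} ⊗ T` maps positive
semidefinite matrices to positive semidefinite matrices. -/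
def IsCompletelyPositive {n m : ℕ}
    (T : Matrix (Fin n) (Fin n) ℂ →ₗ[ℂ] Matrix (Fin m) (Fin m) ℂ) : Prop :=
  ∀ (k : ℕ) (M : Matrix (Fin k × Fin n) (Fin k × Fin n) ℂ), M.PosSemidef →
    Matrix.PosSemidef (fun p q : Fin k × Fin m =>
      T (fun a b => M (p.1, a) (q.1, b)) p.2 q.2)

/-!
Stacking `x` and `yᴴ` into one column `S`, the positive matrix `S * Sᴴ` has the blocks
`x * xᴴ`, `x * y` and `yᴴ * y`, so by complete positivity the block matrix with entries
`T (x * xᴴ)`, `T (x * y)`, `T (yᴴ * y)` is positive. A positive matrix is a Gram matrix `Rᴴ * R`;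
its blocks are `R₀ᴴ * R₀`, `R₀ᴴ * R₁`, `R₁ᴴ * R₁` for column blocks `R₀`, `R₁` of `R`, and the
C⋆-identity `‖Rᵢᴴ * Rᵢ‖ = ‖Rᵢ‖ ^ 2` bounds the off-diagonal one.
-/

namespace Matrix

theorem PosSemidef.exists_eq_conjTranspose_mul_self {ι : Type*} [Fintype ι] [DecidableEq ι]
    {N : Matrix ι ι ℂ} (hN : N.PosSemidef) : ∃ R : Matrix ι ι ℂ, N = Rᴴ * R := by
  open scoped MatrixOrder in
  exact CStarAlgebra.nonneg_iff_eq_star_mul_self.mp hN.nonneg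

theorem l2_opNorm_conjTranspose_mul_le {𝕜 ι κ κ' : Type*} [RCLike 𝕜] [Fintype ι] [DecidableEq ι]
    [Fintype κ] [Fintype κ'] [DecidableEq κ] [DecidableEq κ'] (A : Matrix ι κ 𝕜)
    (B : Matrix ι κ' 𝕜) :
    ‖Aᴴ * B‖ ≤ √‖Aᴴ * A‖ * √‖Bᴴ * B‖ := by
  simp only [l2_opNorm_conjTranspose_mul_self, Real.sqrt_mul_self (norm_nonneg _)]
  calc ‖Aᴴ * B‖ ≤ ‖Aᴴ‖ * ‖B‖ := l2_opNorm_mul _ _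
    _ = ‖A‖ * ‖B‖ := by rw [l2_opNorm_conjTranspose]

theorem PosSemidef.l2_opNorm_submatrix_le {ι α β : Type*} [Fintype ι] [DecidableEq ι]
    [Fintype α] [DecidableEq α] [Fintype β] [DecidableEq β] {N : Matrix ι ι ℂ}
    (hN : N.PosSemidef) (f : α → ι) (g : β → ι) :
    ‖N.submatrix f g‖ ≤ √‖N.submatrix f f‖ * √‖N.submatrix g g‖ := by
  obtain ⟨R, rfl⟩ := hN.exists_eq_conjTranspose_mul_self
  simp only [submatrix_mul _ _ _ _ _ Function.bijective_id, ← conjTranspose_submatrix]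
  exact l2_opNorm_conjTranspose_mul_le _ _

theorem submatrix_stack_mul_conjTranspose {σ ι κ α : Type*} [Fintype κ] [Star α] [Mul α]
    [AddCommMonoid α] (X : σ → Matrix ι κ α) (i j : σ) :
    (of (fun p : σ × ι => X p.1 p.2) * (of fun p : σ × ι => X p.1 p.2)ᴴ).submatrix
      (Prod.mk i) (Prod.mk j) = X i * (X j)ᴴ := by
  rw [submatrix_mul _ _ _ id _ Function.bijective_id, ← conjTranspose_submatrix]
  rfl

end Matrix

/-- Cauchy–Schwarz inequality for completely positive maps: for a completely positive
`T : Mₙ(ℂ) → Mₘ(ℂ)` and `x, y ∈ Mₙ(ℂ)`,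
`‖T(xy)‖ ≤ ‖T(xx*)‖^(1/2)·‖T(y*y)‖^(1/2)` in operator norm. -/
theorem cp_cauchy_schwarz {n m : ℕ}
    (T : Matrix (Fin n) (Fin n) ℂ →ₗ[ℂ] Matrix (Fin m) (Fin m) ℂ)
    (hT : IsCompletelyPositive T) (x y : Matrix (Fin n) (Fin n) ℂ) :
    ‖T (x * y)‖ ≤ ‖T (x * xᴴ)‖ ^ ((1 : ℝ) / 2) * ‖T (yᴴ * y)‖ ^ ((1 : ℝ) / 2) := by
  set S : Matrix (Fin 2 × Fin n) (Fin n) ℂ := of fun p => ![x, yᴴ] p.1 p.2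
  have hN := (hT 2 (S * Sᴴ) (posSemidef_self_mul_conjTranspose S)).l2_opNorm_submatrix_le
    (Prod.mk (0 : Fin 2)) (Prod.mk (1 : Fin 2))
  have block (i j : Fin 2) : submatrix (fun p q : Fin 2 × Fin m =>
      T (fun a b => (S * Sᴴ) (p.1, a) (q.1, b)) p.2 q.2) (Prod.mk i) (Prod.mk j) =
      T (![x, yᴴ] i * (![x, yᴴ] j)ᴴ) := by
    rw [← submatrix_stack_mul_conjTranspose]
    rfl
  rw [← Real.sqrt_eq_rpow, ← Real.sqrt_eq_rpow]
  simpa only [block, cons_val_zero, cons_val_one, conjTranspose_conjTranspose] using hN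
end

section
/- For every ε > 0 and fixed n there exists γ > 0 such that for all density matrices ρ, σ ∈ Mₙ(ℂ), ‖ρ - σ‖₁ ≤ γ implies |S(ρ) - S(σ)| ≤ ε, where S is the von Neumann ln-entropy S(ρ) = -tr(ρ ln ρ). -/
open Matrix
open scoped ComplexOrder

/-- The von Neumann entropy `S(ρ) = -tr(ρ ln ρ)` (natural logarithm, `0 ln 0 = 0`). -/
noncomputable def vonNeumannEntropy {n : ℕ} (ρ : Matrix (Fin n) (Fin n) ℂ) : ℝ :=
  -(Matrix.trace (ρ * cfc Real.log ρ)).re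

/-- The trace norm `‖x‖₁ = tr |x|` of a (self-adjoint) matrix, via functional calculus. -/
noncomputable def traceNorm {n : ℕ} (x : Matrix (Fin n) (Fin n) ℂ) : ℝ :=
  (Matrix.trace (cfc (fun t : ℝ => |t|) x)).re

namespace EntropyAux

attribute [local instance] Matrix.linftyOpNormedRing Matrix.linftyOpNormedAlgebra

variable {n : ℕ}

local notation "M" => Matrix (Fin n) (Fin n) ℂ

lemma trace_conj_diag (U : Matrix.unitaryGroup (Fin n) ℂ) (d : Fin n → ℂ) :
    Matrix.trace ((U : M) * Matrix.diagonal d * star (U : M)) = ∑ i, d i := by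
  rw [Matrix.trace_mul_cycle,
    (Matrix.mem_unitaryGroup_iff').mp U.2, Matrix.one_mul, Matrix.trace_diagonal]

lemma trace_cfc_re {A : M} (hA : A.IsHermitian) (f : ℝ → ℝ) :
    (Matrix.trace (cfc f A)).re = ∑ i, f (hA.eigenvalues i) := by
  rw [hA.cfc_eq f, Matrix.IsHermitian.cfc, Unitary.conjStarAlgAut_apply, trace_conj_diag]
  simp [Complex.re_sum]

lemma trace_pow_re {A : M} (hA : A.IsHermitian) (m : ℕ) :
    (Matrix.trace (A ^ m)).re = ∑ i, (hA.eigenvalues i) ^ m := by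
  have hU' : (hA.eigenvectorUnitary : M) * star (hA.eigenvectorUnitary : M) = 1 :=
    (Matrix.mem_unitaryGroup_iff).mp hA.eigenvectorUnitary.2
  have hU : star (hA.eigenvectorUnitary : M) * (hA.eigenvectorUnitary : M) = 1 :=
    (Matrix.mem_unitaryGroup_iff').mp hA.eigenvectorUnitary.2
  have key : A ^ m = (hA.eigenvectorUnitary : M) *
      Matrix.diagonal ((RCLike.ofReal ∘ hA.eigenvalues) ^ m) * star (hA.eigenvectorUnitary : M) := by
    conv_lhs => rw [hA.spectral_theorem]
    rw [← Matrix.diagonal_pow]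
    induction m with
    | zero =>
        rw [pow_zero, pow_zero, Matrix.mul_one]
        exact hU'.symm
    | succ m ih =>
        rw [pow_succ, pow_succ, ih]
        calc (hA.eigenvectorUnitary : M) * Matrix.diagonal (RCLike.ofReal ∘ hA.eigenvalues) ^ m *
              star (hA.eigenvectorUnitary : M) * ((hA.eigenvectorUnitary : M) *
              Matrix.diagonal (RCLike.ofReal ∘ hA.eigenvalues) * star (hA.eigenvectorUnitary : M))
            = (hA.eigenvectorUnitary : M) * Matrix.diagonal (RCLike.ofReal ∘ hA.eigenvalues) ^ m *
              (star (hA.eigenvectorUnitary : M) * (hA.eigenvectorUnitary : M)) *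
              Matrix.diagonal (RCLike.ofReal ∘ hA.eigenvalues) * star (hA.eigenvectorUnitary : M) := by
              noncomm_ring
          _ = _ := by rw [hU]; noncomm_ring
  rw [key, trace_conj_diag]
  simp [Complex.re_sum, ← Complex.ofReal_pow]

lemma entropy_eq {A : M} (hA : A.IsHermitian) :
    vonNeumannEntropy A = ∑ i, Real.negMulLog (hA.eigenvalues i) := by
  have hU : star (hA.eigenvectorUnitary : M) * (hA.eigenvectorUnitary : M) = 1 :=
    (Matrix.mem_unitaryGroup_iff').mp hA.eigenvectorUnitary.2
  have key : A * cfc Real.log A = (hA.eigenvectorUnitary : M) *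
      Matrix.diagonal (fun i => (RCLike.ofReal (hA.eigenvalues i) : ℂ) *
        RCLike.ofReal (Real.log (hA.eigenvalues i))) * star (hA.eigenvectorUnitary : M) := by
    have h1 : A = (hA.eigenvectorUnitary : M) *
        Matrix.diagonal (RCLike.ofReal ∘ hA.eigenvalues) * star (hA.eigenvectorUnitary : M) :=
      hA.spectral_theorem
    have h2 : cfc Real.log A = (hA.eigenvectorUnitary : M) *
        Matrix.diagonal (RCLike.ofReal ∘ Real.log ∘ hA.eigenvalues) *
        star (hA.eigenvectorUnitary : M) := by
      rw [hA.cfc_eq Real.log, Matrix.IsHermitian.cfc, Unitary.conjStarAlgAut_apply]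
    have hdd : Matrix.diagonal (RCLike.ofReal ∘ hA.eigenvalues) *
        Matrix.diagonal (RCLike.ofReal ∘ Real.log ∘ hA.eigenvalues) =
        Matrix.diagonal (fun i => (RCLike.ofReal (hA.eigenvalues i) : ℂ) *
          RCLike.ofReal (Real.log (hA.eigenvalues i))) := by
      rw [Matrix.diagonal_mul_diagonal]; rfl
    rw [congrArg₂ (· * ·) h1 h2, ← hdd]
    calc (hA.eigenvectorUnitary : M) * Matrix.diagonal (RCLike.ofReal ∘ hA.eigenvalues) *
          star (hA.eigenvectorUnitary : M) * ((hA.eigenvectorUnitary : M) *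
          Matrix.diagonal (RCLike.ofReal ∘ Real.log ∘ hA.eigenvalues) *
          star (hA.eigenvectorUnitary : M))
        = (hA.eigenvectorUnitary : M) * Matrix.diagonal (RCLike.ofReal ∘ hA.eigenvalues) *
          (star (hA.eigenvectorUnitary : M) * (hA.eigenvectorUnitary : M)) *
          Matrix.diagonal (RCLike.ofReal ∘ Real.log ∘ hA.eigenvalues) *
          star (hA.eigenvectorUnitary : M) := by noncomm_ring
      _ = _ := by rw [hU]; noncomm_ring
  rw [vonNeumannEntropy, key, trace_conj_diag]
  simp [Complex.re_sum, ← Complex.ofReal_mul, Real.negMulLog, neg_mul, ← Finset.sum_neg_distrib]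

lemma unitary_entry_le_one (U : Matrix.unitaryGroup (Fin n) ℂ) (i k : Fin n) :
    ‖(U : M) i k‖ ≤ 1 := by
  have h := (Matrix.mem_unitaryGroup_iff).mp U.2
  have h2 := congrFun (congrFun h i) i
  simp only [Matrix.mul_apply, Matrix.star_apply, Matrix.one_apply_eq,
    Matrix.star_eq_conjTranspose, Matrix.conjTranspose_apply] at h2
  have h3 : ∑ j, Complex.normSq ((U : M) i j) = 1 := by
    have := congrArg Complex.re h2
    simpa [Complex.mul_conj] using this
  have h4 : Complex.normSq ((U : M) i k) ≤ 1 := by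
    rw [← h3]
    exact Finset.single_le_sum (fun j _ => Complex.normSq_nonneg _) (Finset.mem_univ k)
  rw [Complex.norm_def]
  exact Real.sqrt_le_one.mpr h4

lemma conj_diag_entry (U : M) (d : Fin n → ℂ) (i j : Fin n) :
    (U * Matrix.diagonal d * star U) i j = ∑ k, U i k * d k * (starRingEnd ℂ) (U j k) := by
  rw [Matrix.mul_apply]
  refine Finset.sum_congr rfl fun k _ => ?_
  rw [Matrix.mul_diagonal, Matrix.star_apply]
  rfl

lemma entry_abs_le {A : M} (hA : A.IsHermitian) (i j : Fin n) :
    ‖A i j‖ ≤ ∑ k, |hA.eigenvalues k| := by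
  have hent : A i j = ∑ k, (hA.eigenvectorUnitary : M) i k * ((hA.eigenvalues k : ℝ) : ℂ) *
      (starRingEnd ℂ) ((hA.eigenvectorUnitary : M) j k) := by
    conv_lhs => rw [hA.spectral_theorem]
    exact conj_diag_entry _ _ i j
  rw [hent]
  calc ‖∑ k, (hA.eigenvectorUnitary : M) i k * ((hA.eigenvalues k : ℝ) : ℂ) *
        (starRingEnd ℂ) ((hA.eigenvectorUnitary : M) j k)‖
      ≤ ∑ k, ‖(hA.eigenvectorUnitary : M) i k * ((hA.eigenvalues k : ℝ) : ℂ) *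
        (starRingEnd ℂ) ((hA.eigenvectorUnitary : M) j k)‖ := norm_sum_le _ _
    _ ≤ ∑ k, |hA.eigenvalues k| := by
        refine Finset.sum_le_sum fun k _ => ?_
        rw [norm_mul, norm_mul, RingHomIsometric.norm_map, Complex.norm_real]
        calc ‖(hA.eigenvectorUnitary : M) i k‖ * |hA.eigenvalues k| *
              ‖(hA.eigenvectorUnitary : M) j k‖
            ≤ 1 * |hA.eigenvalues k| * 1 :=
              mul_le_mul
                (mul_le_mul (unitary_entry_le_one _ _ _) le_rfl (abs_nonneg _) zero_le_one)
                (unitary_entry_le_one _ _ _) (norm_nonneg _)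
                (mul_nonneg zero_le_one (abs_nonneg _))
          _ = |hA.eigenvalues k| := by ring


lemma entry_le_norm (A : M) (i j : Fin n) : ‖A i j‖ ≤ ‖A‖ := by
  rw [Matrix.linfty_opNorm_def]
  have h : ‖A i j‖₊ ≤ ∑ j', ‖A i j'‖₊ :=
    Finset.single_le_sum (f := fun j' => ‖A i j'‖₊) (fun _ _ => zero_le) (Finset.mem_univ j)
  have h2 : (∑ j', ‖A i j'‖₊) ≤ Finset.univ.sup fun i => ∑ j, ‖A i j‖₊ :=
    Finset.le_sup (f := fun i => ∑ j, ‖A i j‖₊) (Finset.mem_univ i)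
  exact_mod_cast h.trans h2

lemma norm_le_sum_entries (A : M) : ‖A‖ ≤ ∑ i, ∑ j, ‖A i j‖ := by
  rw [Matrix.linfty_opNorm_def]
  have h1 : (Finset.univ.sup fun i : Fin n => ∑ j, ‖A i j‖₊) ≤ ∑ i, ∑ j, ‖A i j‖₊ :=
    Finset.sup_le fun i _ =>
      Finset.single_le_sum (f := fun i => ∑ j, ‖A i j‖₊) (fun _ _ => zero_le) (Finset.mem_univ i)
  calc ((Finset.univ.sup fun i : Fin n => ∑ j, ‖A i j‖₊ : NNReal) : ℝ)
      ≤ ((∑ i, ∑ j, ‖A i j‖₊ : NNReal) : ℝ) := by exact_mod_cast h1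
    _ = ∑ i, ∑ j, ‖A i j‖ := by push_cast; rfl

lemma norm_one_le : ‖(1 : M)‖ ≤ 1 := by
  rw [← Matrix.diagonal_one, Matrix.linfty_opNorm_diagonal]
  refine (pi_norm_le_iff_of_nonneg zero_le_one).mpr fun i => ?_
  simp

lemma norm_pow_le_of_le {A : M} {K : ℝ} (hK : 1 ≤ K) (hA : ‖A‖ ≤ K) (m : ℕ) :
    ‖A ^ m‖ ≤ K ^ m := by
  induction m with
  | zero => rw [pow_zero, pow_zero]; exact norm_one_le
  | succ m ih =>
      rw [pow_succ, pow_succ]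
      calc ‖A ^ m * A‖ ≤ ‖A ^ m‖ * ‖A‖ := norm_mul_le _ _
        _ ≤ K ^ m * K := by
            have h0 : (0:ℝ) ≤ K := le_trans zero_le_one hK
            exact mul_le_mul ih hA (norm_nonneg _) (pow_nonneg h0 m)

lemma pow_sub_pow_norm_le {A B : M} {K : ℝ} (hK : 1 ≤ K) (hA : ‖A‖ ≤ K) (hB : ‖B‖ ≤ K)
    (m : ℕ) : ‖A ^ m - B ^ m‖ ≤ m * K ^ m * ‖A - B‖ := by
  have h0 : (0:ℝ) ≤ K := le_trans zero_le_one hK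
  induction m with
  | zero => simp
  | succ m ih =>
      have h1 : A ^ (m+1) - B ^ (m+1) = A * (A ^ m - B ^ m) + (A - B) * B ^ m := by
        rw [pow_succ', pow_succ']
        noncomm_ring
      have h2 : ‖A ^ (m+1) - B ^ (m+1)‖ ≤ ‖A‖ * ‖A ^ m - B ^ m‖ + ‖A - B‖ * ‖B ^ m‖ := by
        rw [h1]
        exact le_trans (norm_add_le _ _) (add_le_add (norm_mul_le _ _) (norm_mul_le _ _))
      have h3 : ‖A‖ * ‖A ^ m - B ^ m‖ ≤ K * (m * K ^ m * ‖A - B‖) :=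
        mul_le_mul hA ih (norm_nonneg _) h0
      have h4 : ‖A - B‖ * ‖B ^ m‖ ≤ ‖A - B‖ * K ^ m :=
        mul_le_mul_of_nonneg_left (norm_pow_le_of_le hK hB m) (norm_nonneg _)
      have h5 : K ^ m ≤ K ^ (m+1) := pow_le_pow_right₀ hK (Nat.le_succ m)
      have h6 : K * (m * K ^ m * ‖A - B‖) = m * K ^ (m+1) * ‖A - B‖ := by ring
      have h7 : ‖A - B‖ * K ^ m ≤ K ^ (m+1) * ‖A - B‖ := by
        rw [mul_comm]
        exact mul_le_mul_of_nonneg_right h5 (norm_nonneg _)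
      push_cast
      nlinarith [norm_nonneg (A - B)]


lemma trace_re_le (X : M) : |(Matrix.trace X).re| ≤ n * ‖X‖ := by
  calc |(Matrix.trace X).re| ≤ ‖Matrix.trace X‖ := by
        exact Complex.abs_re_le_norm _
    _ = ‖∑ i, X i i‖ := rfl
    _ ≤ ∑ i, ‖X i i‖ := norm_sum_le _ _
    _ ≤ ∑ _i : Fin n, ‖X‖ := Finset.sum_le_sum fun i _ => entry_le_norm X i i
    _ = n * ‖X‖ := by simp [Finset.sum_const, nsmul_eq_mul]

lemma F_eq {ρ : M} (hρ : ρ.IsHermitian) (p : Polynomial ℝ) :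
    ∑ m ∈ Finset.range (p.natDegree + 1), p.coeff m * (Matrix.trace (ρ ^ m)).re
      = ∑ i, p.eval (hρ.eigenvalues i) := by
  have h : ∀ m, (Matrix.trace (ρ ^ m)).re = ∑ i, hρ.eigenvalues i ^ m := trace_pow_re hρ
  simp_rw [h, Finset.mul_sum]
  rw [Finset.sum_comm]
  refine Finset.sum_congr rfl fun i _ => ?_
  rw [Polynomial.eval_eq_sum_range]

lemma density_facts {ρ : M} (hρ : ρ.PosSemidef) (hρt : ρ.trace = 1) :
    (∀ i, 0 ≤ hρ.1.eigenvalues i) ∧ (∑ i, hρ.1.eigenvalues i = 1) ∧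
      (∀ i j, ‖ρ i j‖ ≤ 1) := by
  have h0 : ∀ i, 0 ≤ hρ.1.eigenvalues i := hρ.eigenvalues_nonneg
  have hsum : ∑ i, hρ.1.eigenvalues i = 1 := by
    have h := trace_pow_re hρ.1 1
    rw [pow_one, hρt] at h
    simpa [pow_one] using h.symm
  refine ⟨h0, hsum, fun i j => ?_⟩
  calc ‖ρ i j‖ ≤ ∑ k, |hρ.1.eigenvalues k| := entry_abs_le hρ.1 i j
    _ = ∑ k, hρ.1.eigenvalues k := Finset.sum_congr rfl fun k _ => abs_of_nonneg (h0 k)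
    _ = 1 := hsum

end EntropyAux

attribute [local instance] Matrix.linftyOpNormedRing Matrix.linftyOpNormedAlgebra

set_option maxHeartbeats 1000000 in
open EntropyAux in
/-- Uniform continuity of the von Neumann entropy on density matrices (the continuity
consequence of Audenaert's sharpening of Fannes' inequality): for every `ε > 0` there is
`γ > 0` such that any density matrices `ρ, σ ∈ Mₙ(ℂ)` with `‖ρ - σ‖₁ ≤ γ` satisfy
`|S(ρ) - S(σ)| ≤ ε`. -/
theorem entropy_continuity {n : ℕ} (ε : ℝ) (hε : 0 < ε) :
    ∃ γ : ℝ, 0 < γ ∧ ∀ ρ σ : Matrix (Fin n) (Fin n) ℂ,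
      ρ.PosSemidef → ρ.trace = 1 → σ.PosSemidef → σ.trace = 1 →
      traceNorm (ρ - σ) ≤ γ → |vonNeumannEntropy ρ - vonNeumannEntropy σ| ≤ ε := by
  obtain ⟨p, hp⟩ := exists_polynomial_near_of_continuousOn 0 1 Real.negMulLog
    Real.continuous_negMulLog.continuousOn (ε / (4 * (n + 1))) (by positivity)
  set δ : ℝ := ε / (4 * (n + 1)) with hδdef
  have hδ0 : 0 < δ := by positivity
  set K : ℝ := (n : ℝ) ^ 2 + 1 with hKdef
  have hK1 : (1 : ℝ) ≤ K := by nlinarith [sq_nonneg ((n : ℝ))]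
  set C : ℝ := ∑ m ∈ Finset.range (p.natDegree + 1), |p.coeff m| * ((m : ℝ) * K ^ m) * n
    with hCdef
  have hC0 : 0 ≤ C := Finset.sum_nonneg fun m _ => by positivity
  have hC1 : (0 : ℝ) < C + 1 := by linarith
  set γ : ℝ := ε / (2 * (C + 1) * ((n : ℝ) ^ 2 + 1)) with hγdef
  have hγ0 : 0 < γ := by
    apply div_pos hε
    apply mul_pos (mul_pos (by norm_num) hC1) (by positivity)
  refine ⟨γ, hγ0, ?_⟩
  intro ρ σ hρ hρt hσ hσt hd
  obtain ⟨hlam_0, hlam_sum, hρent⟩ := density_facts hρ hρt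
  obtain ⟨hmu_0, hmu_sum, hσent⟩ := density_facts hσ hσt
  have hlam_1 : ∀ i, hρ.1.eigenvalues i ≤ 1 := fun i => hlam_sum ▸
    Finset.single_le_sum (fun k _ => hlam_0 k) (Finset.mem_univ i)
  have hmu_1 : ∀ i, hσ.1.eigenvalues i ≤ 1 := fun i => hmu_sum ▸
    Finset.single_le_sum (fun k _ => hmu_0 k) (Finset.mem_univ i)
  -- entries of ρ - σ are bounded by γ
  have hρσH : (ρ - σ).IsHermitian := hρ.1.sub hσ.1
  have htn : traceNorm (ρ - σ) = ∑ k, |hρσH.eigenvalues k| :=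
    trace_cfc_re hρσH fun t => |t|
  have hdent : ∀ i j, ‖(ρ - σ) i j‖ ≤ γ := fun i j =>
    le_trans (entry_abs_le hρσH i j) (le_trans htn.symm.le hd)
  -- norm bounds
  have hnorm_d : ‖ρ - σ‖ ≤ (n : ℝ) ^ 2 * γ := by
    calc ‖ρ - σ‖ ≤ ∑ i, ∑ j, ‖(ρ - σ) i j‖ := norm_le_sum_entries _
      _ ≤ ∑ _i : Fin n, ∑ _j : Fin n, γ :=
          Finset.sum_le_sum fun i _ => Finset.sum_le_sum fun j _ => hdent i j
      _ = (n : ℝ) ^ 2 * γ := by simp [Finset.sum_const, nsmul_eq_mul]; ring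
  have hnorm_ρ : ‖ρ‖ ≤ K := by
    calc ‖ρ‖ ≤ ∑ i, ∑ j, ‖ρ i j‖ := norm_le_sum_entries _
      _ ≤ ∑ _i : Fin n, ∑ _j : Fin n, (1 : ℝ) :=
          Finset.sum_le_sum fun i _ => Finset.sum_le_sum fun j _ => hρent i j
      _ = (n : ℝ) ^ 2 := by simp [Finset.sum_const, nsmul_eq_mul]; ring
      _ ≤ K := by rw [hKdef]; linarith
  have hnorm_σ : ‖σ‖ ≤ K := by
    calc ‖σ‖ ≤ ∑ i, ∑ j, ‖σ i j‖ := norm_le_sum_entries _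
      _ ≤ ∑ _i : Fin n, ∑ _j : Fin n, (1 : ℝ) :=
          Finset.sum_le_sum fun i _ => Finset.sum_le_sum fun j _ => hσent i j
      _ = (n : ℝ) ^ 2 := by simp [Finset.sum_const, nsmul_eq_mul]; ring
      _ ≤ K := by rw [hKdef]; linarith
  -- the polynomial proxy
  set F : Matrix (Fin n) (Fin n) ℂ → ℝ :=
    fun A => ∑ m ∈ Finset.range (p.natDegree + 1), p.coeff m * (Matrix.trace (A ^ m)).re
    with hFdef
  have hFρ : F ρ = ∑ i, p.eval (hρ.1.eigenvalues i) := F_eq hρ.1 p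
  have hFσ : F σ = ∑ i, p.eval (hσ.1.eigenvalues i) := F_eq hσ.1 p
  have hSρ : vonNeumannEntropy ρ = ∑ i, Real.negMulLog (hρ.1.eigenvalues i) := entropy_eq hρ.1
  have hSσ : vonNeumannEntropy σ = ∑ i, Real.negMulLog (hσ.1.eigenvalues i) := entropy_eq hσ.1
  -- |S - F| ≤ n δ for each
  have approx : ∀ (lam : Fin n → ℝ), (∀ i, 0 ≤ lam i) → (∀ i, lam i ≤ 1) →
      |(∑ i, Real.negMulLog (lam i)) - ∑ i, p.eval (lam i)| ≤ n * δ := by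
    intro lam hl0 hl1
    rw [← Finset.sum_sub_distrib]
    calc |∑ i, (Real.negMulLog (lam i) - p.eval (lam i))|
        ≤ ∑ i, |Real.negMulLog (lam i) - p.eval (lam i)| := Finset.abs_sum_le_sum_abs _ _
      _ ≤ ∑ _i : Fin n, δ := by
          refine Finset.sum_le_sum fun i _ => ?_
          rw [abs_sub_comm]
          exact le_of_lt (hp (lam i) ⟨hl0 i, hl1 i⟩)
      _ = n * δ := by simp [Finset.sum_const, nsmul_eq_mul]
  have hSFρ : |vonNeumannEntropy ρ - F ρ| ≤ n * δ := by
    rw [hSρ, hFρ]; exact approx _ hlam_0 hlam_1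
  have hSFσ : |vonNeumannEntropy σ - F σ| ≤ n * δ := by
    rw [hSσ, hFσ]; exact approx _ hmu_0 hmu_1
  -- |F ρ - F σ| ≤ C * (n² γ)
  have hFF : |F ρ - F σ| ≤ C * ((n : ℝ) ^ 2 * γ) := by
    rw [hFdef]
    simp only [← Finset.sum_sub_distrib, ← mul_sub]
    calc |∑ m ∈ Finset.range (p.natDegree + 1),
            p.coeff m * ((Matrix.trace (ρ ^ m)).re - (Matrix.trace (σ ^ m)).re)|
        ≤ ∑ m ∈ Finset.range (p.natDegree + 1),
            |p.coeff m * ((Matrix.trace (ρ ^ m)).re - (Matrix.trace (σ ^ m)).re)| :=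
          Finset.abs_sum_le_sum_abs _ _
      _ ≤ ∑ m ∈ Finset.range (p.natDegree + 1),
            |p.coeff m| * ((m : ℝ) * K ^ m) * n * ((n : ℝ) ^ 2 * γ) := by
          refine Finset.sum_le_sum fun m _ => ?_
          rw [abs_mul]
          have h1 : (Matrix.trace (ρ ^ m)).re - (Matrix.trace (σ ^ m)).re
              = (Matrix.trace (ρ ^ m - σ ^ m)).re := by
            rw [Matrix.trace_sub, Complex.sub_re]
          rw [h1]
          have h2 : |(Matrix.trace (ρ ^ m - σ ^ m)).re| ≤ n * ‖ρ ^ m - σ ^ m‖ :=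
            trace_re_le _
          have h3 : ‖ρ ^ m - σ ^ m‖ ≤ (m : ℝ) * K ^ m * ‖ρ - σ‖ :=
            pow_sub_pow_norm_le hK1 hnorm_ρ hnorm_σ m
          have h4 : ‖ρ ^ m - σ ^ m‖ ≤ (m : ℝ) * K ^ m * ((n : ℝ) ^ 2 * γ) :=
            h3.trans (by
              apply mul_le_mul_of_nonneg_left hnorm_d
              positivity)
          have h5 : |(Matrix.trace (ρ ^ m - σ ^ m)).re|
              ≤ n * ((m : ℝ) * K ^ m * ((n : ℝ) ^ 2 * γ)) :=
            h2.trans (mul_le_mul_of_nonneg_left h4 (by positivity))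
          calc |p.coeff m| * |(Matrix.trace (ρ ^ m - σ ^ m)).re|
              ≤ |p.coeff m| * (n * ((m : ℝ) * K ^ m * ((n : ℝ) ^ 2 * γ))) :=
                mul_le_mul_of_nonneg_left h5 (abs_nonneg _)
            _ = |p.coeff m| * ((m : ℝ) * K ^ m) * n * ((n : ℝ) ^ 2 * γ) := by ring
      _ = C * ((n : ℝ) ^ 2 * γ) := by rw [hCdef, Finset.sum_mul]
  -- final bounds
  have hnδ : (n : ℝ) * δ ≤ ε / 4 := by
    rw [hδdef]
    have hne : (4 : ℝ) * (n + 1) ≠ 0 := by positivity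
    calc (n : ℝ) * (ε / (4 * (n + 1))) ≤ ((n : ℝ) + 1) * (ε / (4 * (n + 1))) := by
          apply mul_le_mul_of_nonneg_right (by linarith) (by positivity)
      _ = ε / 4 := by field_simp
  have hCγ : C * ((n : ℝ) ^ 2 * γ) ≤ ε / 2 := by
    rw [hγdef]
    have h1 : C * ((n : ℝ) ^ 2 * (ε / (2 * (C + 1) * ((n : ℝ) ^ 2 + 1))))
        ≤ (C + 1) * (((n : ℝ) ^ 2 + 1) * (ε / (2 * (C + 1) * ((n : ℝ) ^ 2 + 1)))) := by
      have hγ0' : 0 ≤ ε / (2 * (C + 1) * ((n : ℝ) ^ 2 + 1)) := le_of_lt (hγdef ▸ hγ0)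
      have := mul_le_mul (le_refl (C + 1))
        (mul_le_mul (by linarith : (n:ℝ)^2 ≤ (n:ℝ)^2 + 1) (le_refl _) hγ0' (by positivity))
        (by positivity) (by linarith)
      calc C * ((n : ℝ) ^ 2 * (ε / (2 * (C + 1) * ((n : ℝ) ^ 2 + 1))))
          ≤ (C + 1) * ((n : ℝ) ^ 2 * (ε / (2 * (C + 1) * ((n : ℝ) ^ 2 + 1)))) := by
            apply mul_le_mul_of_nonneg_right (by linarith)
            positivity
        _ ≤ (C + 1) * (((n : ℝ) ^ 2 + 1) * (ε / (2 * (C + 1) * ((n : ℝ) ^ 2 + 1)))) := this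
    refine h1.trans ?_
    have hne1 : C + 1 ≠ 0 := ne_of_gt hC1
    have hne2 : (n : ℝ) ^ 2 + 1 ≠ 0 := by positivity
    rw [show (C + 1) * (((n : ℝ) ^ 2 + 1) * (ε / (2 * (C + 1) * ((n : ℝ) ^ 2 + 1)))) = ε / 2
      from by field_simp]
  calc |vonNeumannEntropy ρ - vonNeumannEntropy σ|
      ≤ |vonNeumannEntropy ρ - F ρ| + |F ρ - F σ| + |F σ - vonNeumannEntropy σ| := by
        have := abs_sub_le (vonNeumannEntropy ρ) (F ρ) (vonNeumannEntropy σ)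
        have h2 := abs_sub_le (F ρ) (F σ) (vonNeumannEntropy σ)
        linarith
    _ ≤ n * δ + C * ((n : ℝ) ^ 2 * γ) + n * δ := by
        have h3 : |F σ - vonNeumannEntropy σ| = |vonNeumannEntropy σ - F σ| := abs_sub_comm _ _
        rw [h3]
        exact add_le_add (add_le_add hSFρ hFF) hSFσ
    _ ≤ ε / 4 + ε / 2 + ε / 4 := by linarith
    _ = ε := by ring
end
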